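/- Every facet of the 24-cell is a regular octahedron: for every w ∈ G ∪ R ∪ B, there exists an isometric affine embedding ι : EuclideanSpace ℝ (Fin 3) → EuclideanSpace ℝ (Fin 4) such that { x ∈ convexHull ℝ V : ⟪x, w⟫ = 1 } = ι '' (convexHull ℝ {e₁, -e₁, e₂, -e₂, e₃, -e₃}), where e₁, e₂, e₃ are the standard basis vectors of EuclideanSpace ℝ (Fin 3). -/

import Mathlib

open scoped RealInnerProductSpace Pointwise

/-- The `i`-th standard basis vector of `EuclideanSpace ℝ (Fin 4)`. -/
noncomputable def stdV (i : Fin 4) : EuclideanSpace ℝ (Fin 4) :=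
  EuclideanSpace.single i (1 : ℝ)

/-- The 24 vertices of the 24-cell: all permutations of the coordinates of `(±1, ±1, 0, 0)`. -/
def cellV : Set (EuclideanSpace ℝ (Fin 4)) :=
  {x | ∃ i j : Fin 4, i ≠ j ∧ ∃ ε δ : ℝ, (ε = 1 ∨ ε = -1) ∧ (δ = 1 ∨ δ = -1) ∧
    x = ε • stdV i + δ • stdV j}

/-- The 8 green vectors `±eᵢ`. -/
def colG : Set (EuclideanSpace ℝ (Fin 4)) :=
  {x | ∃ i : Fin 4, x = stdV i ∨ x = -stdV i}

/-- The 8 red vectors `(±1/2, ±1/2, ±1/2, ±1/2)` with an even number of minus signs. -/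
def colR : Set (EuclideanSpace ℝ (Fin 4)) :=
  {x | ∃ ε : Fin 4 → ℝ, (∀ i, ε i = 1 ∨ ε i = -1) ∧ (∏ i, ε i) = 1 ∧ ∀ i, x i = ε i / 2}

/-- The 8 blue vectors `(±1/2, ±1/2, ±1/2, ±1/2)` with an odd number of minus signs. -/
def colB : Set (EuclideanSpace ℝ (Fin 4)) :=
  {x | ∃ ε : Fin 4 → ℝ, (∀ i, ε i = 1 ∨ ε i = -1) ∧ (∏ i, ε i) = -1 ∧ ∀ i, x i = ε i / 2}

/-- The polar of a subset of `EuclideanSpace ℝ (Fin 4)`. -/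
def polarSet (S : Set (EuclideanSpace ℝ (Fin 4))) : Set (EuclideanSpace ℝ (Fin 4)) :=
  {y | ∀ x ∈ S, ⟪x, y⟫ ≤ 1}

/-- The `i`-th standard basis vector of `EuclideanSpace ℝ (Fin 3)`. -/
noncomputable def stdW (i : Fin 3) : EuclideanSpace ℝ (Fin 3) :=
  EuclideanSpace.single i (1 : ℝ)

/-! Each `w ∈ G ∪ R ∪ B` has `|wᵢ| + |wⱼ| ≤ 1` for `i ≠ j`, so `⟪v, w⟫ ≤ 1` on `V` and the facet
`{x ∈ 𝒞 | ⟪x, w⟫ = 1}` is the convex hull of the vertices on that hyperplane. These are six points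
`w ± uₖ` with `u` orthonormal: for `w = ±eₘ` the `uₖ` are the other three basis vectors; for
`w = σ / 2` with `σ` a sign vector the vertices are `σᵢ eᵢ + σⱼ eⱼ`, and the six 2-subsets `{i, j}`
of `Fin 4` form the three complementary pairs `{0, k + 1}`, `{0, k + 1}ᶜ`. The affine isometry
`x ↦ w + ∑ₖ xₖ uₖ` maps the standard octahedron onto the facet. -/

theorem sep_convexHull_eq_convexHull_sep {𝕜 E : Type*} [Field 𝕜] [LinearOrder 𝕜]
    [IsStrictOrderedRing 𝕜] [AddCommGroup E] [Module 𝕜 E] {s : Set E} (l : E →ₗ[𝕜] 𝕜) {c : 𝕜}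
    (hs : ∀ v ∈ s, l v ≤ c) :
    {x ∈ convexHull 𝕜 s | l x = c} = convexHull 𝕜 {v ∈ s | l v = c} := by
  refine Set.Subset.antisymm ?_ fun x hx =>
    ⟨convexHull_mono (Set.sep_subset _ _) hx,
      convexHull_min (fun v hv => hv.2) (convex_hyperplane l.isLinear c) hx⟩
  rintro x ⟨hx, hxc⟩
  obtain ⟨ι, _, a, z, ha₀, ha₁, hz, rfl⟩ := mem_convexHull_iff_exists_fintype.1 hx
  -- the slacks `c - l (z i)` are nonnegative and their `a`-weighted sum vanishes
  have hslack : ∑ i, a i * (c - l (z i)) = 0 := by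
    simp only [map_sum, map_smul, smul_eq_mul] at hxc
    simp only [mul_sub, Finset.sum_sub_distrib, ← Finset.sum_mul, ha₁, hxc, one_mul, sub_self]
  have hface : ∀ i, a i ≠ 0 → z i ∈ {v ∈ s | l v = c} := fun i hi =>
    ⟨hz i, by
      have := (Finset.sum_eq_zero_iff_of_nonneg fun j _ =>
        mul_nonneg (ha₀ j) (sub_nonneg.2 (hs _ (hz j)))).1 hslack i (Finset.mem_univ i)
      linarith [(mul_eq_zero.1 this).resolve_left hi]⟩
  simpa only [finsum_eq_sum_of_fintype] using
    (convex_convexHull 𝕜 _).finsum_mem ha₀ (by rwa [finsum_eq_sum_of_fintype])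
      fun i hi => subset_convexHull 𝕜 _ (hface i hi)

def crossPolytopeVertices {ι E : Type*} [AddCommGroup E] (c : E) (u : ι → E) : Set E :=
  {v | ∃ i, v = c + u i ∨ v = c - u i}

theorem image_add_crossPolytopeVertices_zero {ι E F : Type*} [AddCommGroup E] [AddCommGroup F]
    (c : F) (L : E →+ F) (u : ι → E) :
    (fun x => c + L x) '' crossPolytopeVertices 0 u = crossPolytopeVertices c (L ∘ u) := by
  ext y
  simp only [crossPolytopeVertices, Set.mem_image, Set.mem_ofPred_eq, Function.comp_apply]
  constructor
  · rintro ⟨v, ⟨i, rfl | rfl⟩, rfl⟩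
    exacts [⟨i, .inl (by simp)⟩, ⟨i, .inr (by simp [sub_eq_add_neg])⟩]
  · rintro ⟨i, rfl | rfl⟩
    exacts [⟨_, ⟨i, .inl rfl⟩, by simp⟩, ⟨_, ⟨i, .inr rfl⟩, by simp [sub_eq_add_neg]⟩]

theorem Orthonormal.exists_linearIsometry_single {𝕜 ι E : Type*} [RCLike 𝕜] [Fintype ι]
    [DecidableEq ι] [NormedAddCommGroup E] [InnerProductSpace 𝕜 E] {u : ι → E}
    (hu : Orthonormal 𝕜 u) :
    ∃ L : EuclideanSpace 𝕜 ι →ₗᵢ[𝕜] E, ∀ i, L (EuclideanSpace.single i 1) = u i := by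
  let b := EuclideanSpace.basisFun ι 𝕜
  have hb : ⇑(b.toBasis.constr 𝕜 u) ∘ ⇑b.toBasis = u := funext (b.toBasis.constr_basis 𝕜 u)
  exact ⟨(b.toBasis.constr 𝕜 u).isometryOfOrthonormal (b.coe_toBasis.symm ▸ b.orthonormal)
    (by rwa [hb]), fun i => by simp [b]⟩

theorem exists_affineIsometry_image_convexHull_crossPolytopeVertices {ι E : Type*} [Fintype ι]
    [DecidableEq ι] [NormedAddCommGroup E] [InnerProductSpace ℝ E] (c : E) {u : ι → E}
    (hu : Orthonormal ℝ u) :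
    ∃ φ : EuclideanSpace ℝ ι →ᵃⁱ[ℝ] E,
      φ '' convexHull ℝ (crossPolytopeVertices 0 fun i => EuclideanSpace.single i 1) =
        convexHull ℝ (crossPolytopeVertices c u) := by
  obtain ⟨L, hL⟩ := hu.exists_linearIsometry_single
  let φ := (AffineIsometryEquiv.constVAdd ℝ E c).toAffineIsometry.comp L.toAffineIsometry
  have hφ : ⇑φ = fun x => c + L.toLinearMap.toAddMonoidHom x := rfl
  refine ⟨φ, ?_⟩
  rw [← φ.coe_toAffineMap, AffineMap.image_convexHull, φ.coe_toAffineMap, hφ,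
    image_add_crossPolytopeVertices_zero]
  congr 2
  exact funext hL

theorem crossPolytopeVertices_zero_single_eq_stdW :
    crossPolytopeVertices 0 (fun i : Fin 3 => EuclideanSpace.single i (1 : ℝ)) =
      {stdW 0, -stdW 0, stdW 1, -stdW 1, stdW 2, -stdW 2} := by
  ext v
  simp [crossPolytopeVertices, stdW, Fin.exists_fin_succ, or_assoc]

@[simp]
theorem stdV_apply (i l : Fin 4) : stdV i l = if l = i then 1 else 0 :=
  PiLp.single_apply 2 ℝ i 1 l

theorem orthonormal_stdV : Orthonormal ℝ stdV := by
  rw [orthonormal_iff_ite]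
  intro i j
  simp [stdV, EuclideanSpace.inner_single_left]

theorem inner_smul_stdV_add_smul_stdV (ε δ : ℝ) (i j : Fin 4) (w : EuclideanSpace ℝ (Fin 4)) :
    ⟪ε • stdV i + δ • stdV j, w⟫ = ε * w i + δ * w j := by
  simp [inner_add_left, real_inner_smul_left, stdV, EuclideanSpace.inner_single_left]

theorem inner_le_one_of_mem_cellV {w : EuclideanSpace ℝ (Fin 4)}
    (hw : ∀ i j, i ≠ j → |w i| + |w j| ≤ 1) {v : EuclideanSpace ℝ (Fin 4)} (hv : v ∈ cellV) :
    ⟪v, w⟫ ≤ 1 := by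
  obtain ⟨i, j, hij, ε, δ, hε, hδ, rfl⟩ := hv
  have hsign : ∀ {s : ℝ} (x : ℝ), (s = 1 ∨ s = -1) → s * x ≤ |x| := by
    rintro s x (rfl | rfl)
    exacts [by simpa using le_abs_self x, by simpa using neg_le_abs x]
  rw [inner_smul_stdV_add_smul_stdV]
  linarith [hsign (w i) hε, hsign (w j) hδ, hw i j hij]

/-- The bound on `w` makes `⟪·, w⟫ = 1` a supporting hyperplane of the 24-cell; the vertices on it
are `w ± uₖ`. -/
structure IsOctahedralFacetFrame (w : EuclideanSpace ℝ (Fin 4))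
    (u : Fin 3 → EuclideanSpace ℝ (Fin 4)) : Prop where
  orthonormal : Orthonormal ℝ u
  abs_add_abs_le_one : ∀ i j, i ≠ j → |w i| + |w j| ≤ 1
  sep_inner_eq_one : {v ∈ cellV | ⟪v, w⟫ = 1} = crossPolytopeVertices w u

theorem IsOctahedralFacetFrame.exists_affineIsometry {w : EuclideanSpace ℝ (Fin 4)}
    {u : Fin 3 → EuclideanSpace ℝ (Fin 4)} (h : IsOctahedralFacetFrame w u) :
    ∃ ι : EuclideanSpace ℝ (Fin 3) →ᵃⁱ[ℝ] EuclideanSpace ℝ (Fin 4),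
      {x ∈ convexHull ℝ cellV | ⟪x, w⟫ = 1} =
        ι '' (convexHull ℝ {stdW 0, -stdW 0, stdW 1, -stdW 1, stdW 2, -stdW 2}) := by
  obtain ⟨ι, hι⟩ := exists_affineIsometry_image_convexHull_crossPolytopeVertices w h.orthonormal
  refine ⟨ι, ?_⟩
  rw [← crossPolytopeVertices_zero_single_eq_stdW, hι, ← h.sep_inner_eq_one]
  exact sep_convexHull_eq_convexHull_sep ((innerₗ _).flip w) fun v hv =>
    inner_le_one_of_mem_cellV h.abs_add_abs_le_one hv

theorem cellV_sep_inner_smul_stdV (m : Fin 4) {τ : ℝ} (hτ : τ = 1 ∨ τ = -1) :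
    {v ∈ cellV | ⟪v, τ • stdV m⟫ = 1} =
      crossPolytopeVertices (τ • stdV m) fun k => stdV (m.succAbove k) := by
  have hττ : τ * τ = 1 := by rcases hτ with rfl | rfl <;> norm_num
  have hvert : ∀ {j : Fin 4} {ε δ : ℝ}, j ≠ m → (δ = 1 ∨ δ = -1) → ε * τ = 1 →
      ε • stdV m + δ • stdV j ∈
        crossPolytopeVertices (τ • stdV m) fun k => stdV (m.succAbove k) := by
    rintro j ε δ hj hδ h
    obtain ⟨k, rfl⟩ := Fin.exists_succAbove_eq hj
    obtain rfl : ε = τ := by rw [← mul_one ε, ← hττ, ← mul_assoc, h, one_mul]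
    rcases hδ with rfl | rfl
    exacts [⟨k, .inl (by rw [one_smul])⟩, ⟨k, .inr (by rw [neg_one_smul, sub_eq_add_neg])⟩]
  ext v
  constructor
  · rintro ⟨⟨i, j, hij, ε, δ, hε, hδ, rfl⟩, h⟩
    rw [inner_smul_stdV_add_smul_stdV] at h
    by_cases hi : i = m
    · subst hi
      simp [Ne.symm hij] at h
      exact hvert (Ne.symm hij) hδ h
    by_cases hj : j = m
    · subst hj
      simp [hij] at h
      rw [add_comm]
      exact hvert hij hε h
    · simp [hi, hj] at h
  · have hmem : ∀ k {δ : ℝ}, (δ = 1 ∨ δ = -1) → τ • stdV m + δ • stdV (m.succAbove k) ∈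
        {v ∈ cellV | ⟪v, τ • stdV m⟫ = 1} := fun k δ hδ =>
      ⟨⟨m, _, (Fin.succAbove_ne m k).symm, τ, δ, hτ, hδ, rfl⟩, by
        simp [inner_smul_stdV_add_smul_stdV, Fin.succAbove_ne m k, hττ]⟩
    rintro ⟨k, rfl | rfl⟩
    · simpa using hmem k (.inl rfl)
    · simpa [sub_eq_add_neg] using hmem k (.inr rfl)

theorem isOctahedralFacetFrame_smul_stdV (m : Fin 4) {τ : ℝ} (hτ : τ = 1 ∨ τ = -1) :
    IsOctahedralFacetFrame (τ • stdV m) fun k => stdV (m.succAbove k) where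
  orthonormal := orthonormal_stdV.comp _ Fin.succAbove_right_injective
  abs_add_abs_le_one i j hij := by
    have : |τ| = 1 := by rcases hτ with rfl | rfl <;> simp
    by_cases hi : i = m <;> by_cases hj : j = m <;> simp_all
  sep_inner_eq_one := cellV_sep_inner_smul_stdV m hτ

theorem card_eq_two_iff_exists_pair_zero :
    ∀ A : Finset (Fin 4), A.card = 2 ↔ ∃ k : Fin 3, A = {0, k.succ} ∨ A = {0, k.succ}ᶜ := by
  decide

def signVector (σ : Fin 4 → ℝ) (A : Finset (Fin 4)) : EuclideanSpace ℝ (Fin 4) :=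
  WithLp.toLp 2 fun l => if l ∈ A then σ l else 0

theorem smul_stdV_add_smul_stdV_eq_signVector (σ : Fin 4 → ℝ) {i j : Fin 4} (hij : i ≠ j) :
    σ i • stdV i + σ j • stdV j = signVector σ {i, j} := by
  ext l
  by_cases hi : l = i <;> by_cases hj : l = j <;> simp_all [signVector]

noncomputable def signFrame (σ : Fin 4 → ℝ) (k : Fin 3) : EuclideanSpace ℝ (Fin 4) :=
  WithLp.toLp 2 fun l => (if l ∈ ({0, k.succ} : Finset (Fin 4)) then σ l else -σ l) / 2

section half

variable {σ : Fin 4 → ℝ} {w : EuclideanSpace ℝ (Fin 4)}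

theorem add_signFrame (hw : ∀ i, w i = σ i / 2) (k : Fin 3) :
    w + signFrame σ k = signVector σ {0, k.succ} := by
  ext l
  simp only [PiLp.add_apply, hw, signFrame, signVector]
  split_ifs <;> ring

theorem sub_signFrame (hw : ∀ i, w i = σ i / 2) (k : Fin 3) :
    w - signFrame σ k = signVector σ {0, k.succ}ᶜ := by
  ext l
  simp only [PiLp.sub_apply, hw, signFrame, signVector, Finset.mem_compl]
  split_ifs <;> ring

theorem orthonormal_signFrame (hσ : ∀ i, σ i = 1 ∨ σ i = -1) :
    Orthonormal ℝ (signFrame σ) := by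
  have hsq : ∀ i, σ i * σ i = 1 := fun i => by rcases hσ i with h | h <;> rw [h] <;> norm_num
  rw [orthonormal_iff_ite]
  intro a b
  simp only [signFrame, PiLp.inner_apply, RCLike.inner_apply, conj_trivial, Fin.sum_univ_four]
  fin_cases a <;> fin_cases b <;> simp <;> linarith [hsq 0, hsq 1, hsq 2, hsq 3]

theorem mem_cellV_sep_inner_iff_signVector (hσ : ∀ i, σ i = 1 ∨ σ i = -1)
    (hw : ∀ i, w i = σ i / 2) (v : EuclideanSpace ℝ (Fin 4)) :
    v ∈ {v ∈ cellV | ⟪v, w⟫ = 1} ↔ ∃ A : Finset (Fin 4), A.card = 2 ∧ v = signVector σ A := by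
  have hsign : ∀ {a b : ℝ}, (a = 1 ∨ a = -1) → (b = 1 ∨ b = -1) →
      a * b ≤ 1 ∧ (a * b = 1 ↔ a = b) := by
    rintro a b (rfl | rfl) (rfl | rfl) <;> norm_num
  constructor
  · rintro ⟨⟨i, j, hij, ε, δ, hε, hδ, rfl⟩, h⟩
    rw [inner_smul_stdV_add_smul_stdV, hw, hw] at h
    have hi := hsign hε (hσ i)
    have hj := hsign hδ (hσ j)
    obtain rfl : ε = σ i := hi.2.1 (by linarith)
    obtain rfl : δ = σ j := hj.2.1 (by linarith)
    exact ⟨{i, j}, Finset.card_pair hij, smul_stdV_add_smul_stdV_eq_signVector σ hij⟩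
  · rintro ⟨A, hA, rfl⟩
    obtain ⟨i, j, hij, rfl⟩ := Finset.card_eq_two.1 hA
    rw [← smul_stdV_add_smul_stdV_eq_signVector σ hij]
    refine ⟨⟨i, j, hij, σ i, σ j, hσ i, hσ j, rfl⟩, ?_⟩
    rw [inner_smul_stdV_add_smul_stdV, hw, hw]
    linarith [(hsign (hσ i) (hσ i)).2.2 rfl, (hsign (hσ j) (hσ j)).2.2 rfl]

theorem cellV_sep_inner_signFrame (hσ : ∀ i, σ i = 1 ∨ σ i = -1) (hw : ∀ i, w i = σ i / 2) :
    {v ∈ cellV | ⟪v, w⟫ = 1} = crossPolytopeVertices w (signFrame σ) := by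
  ext v
  rw [mem_cellV_sep_inner_iff_signVector hσ hw]
  simp only [card_eq_two_iff_exists_pair_zero, crossPolytopeVertices, Set.mem_ofPred_eq,
    add_signFrame hw, sub_signFrame hw]
  constructor
  · rintro ⟨A, ⟨k, rfl | rfl⟩, rfl⟩
    exacts [⟨k, .inl rfl⟩, ⟨k, .inr rfl⟩]
  · rintro ⟨k, rfl | rfl⟩
    exacts [⟨_, ⟨k, .inl rfl⟩, rfl⟩, ⟨_, ⟨k, .inr rfl⟩, rfl⟩]

theorem isOctahedralFacetFrame_signFrame (hσ : ∀ i, σ i = 1 ∨ σ i = -1)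
    (hw : ∀ i, w i = σ i / 2) :
    IsOctahedralFacetFrame w (signFrame σ) where
  orthonormal := orthonormal_signFrame hσ
  abs_add_abs_le_one i j _ := by
    rw [hw, hw]
    rcases hσ i with h | h <;> rcases hσ j with h' | h' <;> norm_num [h, h']
  sep_inner_eq_one := cellV_sep_inner_signFrame hσ hw

end half

/-- Every facet of the 24-cell is a regular ideal octahedron: the facet dual to
`w ∈ G ∪ R ∪ B` is the image of the standard regular octahedron under an isometric
affine embedding of `EuclideanSpace ℝ (Fin 3)` into `EuclideanSpace ℝ (Fin 4)`. -/
theorem facet_is_regular_octahedron (w : EuclideanSpace ℝ (Fin 4))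
    (hw : w ∈ colG ∪ colR ∪ colB) :
    ∃ ι : EuclideanSpace ℝ (Fin 3) →ᵃⁱ[ℝ] EuclideanSpace ℝ (Fin 4),
      {x ∈ convexHull ℝ cellV | ⟪x, w⟫ = 1} =
        ι '' (convexHull ℝ {stdW 0, -stdW 0, stdW 1, -stdW 1, stdW 2, -stdW 2}) := by
  rcases hw with (⟨m, rfl | rfl⟩ | ⟨σ, hσ, -, hwσ⟩) | ⟨σ, hσ, -, hwσ⟩
  · rw [← one_smul ℝ (stdV m)]
    exact (isOctahedralFacetFrame_smul_stdV m (.inl rfl)).exists_affineIsometry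
  · rw [← neg_one_smul ℝ (stdV m)]
    exact (isOctahedralFacetFrame_smul_stdV m (.inr rfl)).exists_affineIsometry
  all_goals exact (isOctahedralFacetFrame_signFrame hσ hwσ).exists_affineIsometry
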